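/- (Corollary 1, perfect-CSI case: rank-one tightness with multiantenna eavesdroppers and EH receivers.) Let n, K, L ≥ 1; let h_s ∈ ℂⁿ; for k = 1,…,K let H_{e,k} ∈ ℂ^{n×m_k} and for l = 1,…,L let H_l ∈ ℂ^{n×m'_l} be complex matrices; let σ_s, σ_e > 0, P > 0, p_i > 0 (i = 1,…,n), E_l > 0, t ∈ (0,1]. Define the feasible set of pairs (Q, W) of n×n PSD complex matrices satisfying: (i) for every k, the m_k×m_k Hermitian matrix (1/t − 1)·σ_e²·I_{m_k} + H_{e,k}^H((1/t − 1)·W − Q)H_{e,k} is PSD; (ii) Tr(Q + W) ≤ P; (iii) for every i, the i-th diagonal entry of Q + W is at most p_i; (iv) for every l, Tr(H_l^H(Q + W)H_l) ≥ E_l. Define φ(Q, W) = (h_s^H Q h_s)/(h_s^H W h_s + σ_s²). If the feasible set is nonempty, then there exists a feasible pair (Q*, W*) with rank(Q*) ≤ 1 and φ(Q*, W*) ≥ φ(Q, W) for every feasible (Q, W). -/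

import Mathlib

open Matrix
open scoped ComplexOrder

/-- Feasible set with multiantenna eavesdroppers and EH receivers (perfect CSI). -/
def Feas7 (n K L : ℕ) (m : Fin K → ℕ) (m' : Fin L → ℕ)
    (He : (k : Fin K) → Matrix (Fin n) (Fin (m k)) ℂ)
    (Hl : (l : Fin L) → Matrix (Fin n) (Fin (m' l)) ℂ)
    (σe P : ℝ) (p : Fin n → ℝ) (E : Fin L → ℝ) (t : ℝ)
    (Q W : Matrix (Fin n) (Fin n) ℂ) : Prop :=
  Q.PosSemidef ∧ W.PosSemidef ∧
  (∀ k, ((((1 / t - 1) * σe ^ 2 : ℝ) : ℂ) • (1 : Matrix (Fin (m k)) (Fin (m k)) ℂ) +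
      (He k)ᴴ * ((((1 / t - 1 : ℝ)) : ℂ) • W - Q) * He k).PosSemidef) ∧
  (Q + W).trace.re ≤ P ∧
  (∀ i, ((Q + W) i i).re ≤ p i) ∧
  (∀ l, E l ≤ ((Hl l)ᴴ * (Q + W) * Hl l).trace.re)

/-- Objective `φ(Q,W) = h_s^H Q h_s / (h_s^H W h_s + σ_s²)`. -/
noncomputable def phi7 (n : ℕ) (hs : Fin n → ℂ) (σs : ℝ)
    (Q W : Matrix (Fin n) (Fin n) ℂ) : ℝ :=
  (star hs ⬝ᵥ (Q *ᵥ hs)).re / ((star hs ⬝ᵥ (W *ᵥ hs)).re + σs ^ 2)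

/-!
The feasible set is compact (pairs of PSD matrices of bounded trace, cut out by closed
conditions) and `φ` is continuous on it, its denominator being at least `σ_s² > 0`; so `φ`
attains its maximum at some feasible `(Q, W)`. With `h = h_s`, replace `Q` by
`Q' = (Qh)(Qh)ᴴ / (hᴴQh)` and `W` by `W + (Q - Q')`. Cauchy–Schwarz for the semi-inner
product `xᴴQy` gives `Q - Q' ⪰ 0`; `hᴴQ'h = hᴴQh`, so `φ` does not change; `Q + W` does not
change, so the power and energy constraints persist; and the eavesdropper matrix only gains
the PSD term `H_eᴴ ((Q - Q') / t) H_e`.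
-/

namespace Matrix

open RCLike

variable {ι 𝕜 : Type*} [Fintype ι] [RCLike 𝕜]

section PosSemidef

variable {M : Matrix ι ι 𝕜}

theorem PosSemidef.norm_dotProduct_mulVec_sq_le (hM : M.PosSemidef) (x y : ι → 𝕜) :
    ‖star x ⬝ᵥ M *ᵥ y‖ ^ 2 ≤ re (star x ⬝ᵥ M *ᵥ x) * re (star y ⬝ᵥ M *ᵥ y) := by
  let := M.toSeminormedAddCommGroup hM
  let := M.toInnerProductSpace hM
  have hinner (u v : ι → 𝕜) : inner 𝕜 u v = star u ⬝ᵥ M *ᵥ v := dotProduct_comm _ _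
  have := inner_mul_inner_self_le (𝕜 := 𝕜) x y
  rwa [norm_inner_symm y x, ← sq, hinner, hinner, hinner] at this

theorem PosSemidef.ofReal_re_dotProduct_mulVec (hM : M.PosSemidef) (x : ι → 𝕜) :
    (re (star x ⬝ᵥ M *ᵥ x) : 𝕜) = star x ⬝ᵥ M *ᵥ x := by
  obtain ⟨a, -, ha⟩ := nonneg_iff_exists_ofReal.mp (hM.dotProduct_mulVec_nonneg x)
  rw [← ha, ofReal_re]

theorem PosSemidef.re_apply_le_re_trace (hM : M.PosSemidef) (i : ι) :
    re (M i i) ≤ re M.trace := by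
  rw [trace, map_sum]
  exact Finset.single_le_sum (f := fun j => re (M j j))
    (fun _ _ => (nonneg_iff.mp hM.diag_nonneg).1) (Finset.mem_univ i)

theorem PosSemidef.norm_apply_le_re_trace (hM : M.PosSemidef) (i j : ι) :
    ‖M i j‖ ≤ re M.trace := by
  classical
  have hcs := hM.norm_dotProduct_mulVec_sq_le (Pi.single i 1) (Pi.single j 1)
  simp only [Pi.star_single, star_one, mulVec_single_one, single_dotProduct, one_mul,
    col_apply] at hcs
  have hi := hM.re_apply_le_re_trace i
  have hj := hM.re_apply_le_re_trace j
  have hi0 := (nonneg_iff.mp (hM.diag_nonneg (i := i))).1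
  have hj0 := (nonneg_iff.mp (hM.diag_nonneg (i := j))).1
  exact (abs_le_of_sq_le_sq' (by nlinarith) (by linarith)).2

theorem PosSemidef.re_trace_le_re_trace_add {A : Matrix ι ι 𝕜} (hM : M.PosSemidef) :
    re A.trace ≤ re (A + M).trace := by
  rw [trace_add, map_add]
  exact le_add_of_nonneg_right (nonneg_iff.mp hM.trace_nonneg).1

end PosSemidef

theorem isClosed_setOf_posSemidef : IsClosed {M : Matrix ι ι 𝕜 | M.PosSemidef} := by
  simp only [posSemidef_iff_dotProduct_mulVec, Set.ofPred_and, Set.ofPred_forall]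
  refine .inter (isClosed_eq (by fun_prop) continuous_id) (isClosed_iInter fun x => ?_)
  exact isClosed_le continuous_const (by fun_prop)

theorem isCompact_setOf_posSemidef_re_trace_le (c : ℝ) :
    IsCompact {M : Matrix ι ι 𝕜 | M.PosSemidef ∧ re M.trace ≤ c} := by
  have hclosed : IsClosed {M : Matrix ι ι 𝕜 | M.PosSemidef ∧ re M.trace ≤ c} :=
    isClosed_setOf_posSemidef.inter
      (isClosed_le (continuous_re.comp continuous_id.matrix_trace) continuous_const)
  refine (isCompact_univ_pi fun _ : ι => isCompact_univ_pi fun _ : ι =>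
    isCompact_closedBall (0 : 𝕜) c).of_isClosed_subset hclosed ?_
  rintro M ⟨hM, hc⟩ i - j -
  simpa using (hM.norm_apply_le_re_trace i j).trans hc

/-- Through `0⁻¹ = 0` this is `0` when `hᴴ Q h = 0`; the lemmas below cover that case too. -/
noncomputable def rankOneCompression (Q : Matrix ι ι 𝕜) (h : ι → 𝕜) : Matrix ι ι 𝕜 :=
  (((re (star h ⬝ᵥ Q *ᵥ h))⁻¹ : ℝ) : 𝕜) • vecMulVec (Q *ᵥ h) (star (Q *ᵥ h))

section RankOneCompression

variable {Q : Matrix ι ι 𝕜}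

theorem rank_rankOneCompression_le (Q : Matrix ι ι 𝕜) (h : ι → 𝕜) :
    (rankOneCompression Q h).rank ≤ 1 := by
  rw [rankOneCompression, ← smul_vecMulVec]
  exact rank_vecMulVec_le _ _

theorem dotProduct_rankOneCompression_mulVec_self (Q : Matrix ι ι 𝕜) (h x : ι → 𝕜) :
    star x ⬝ᵥ rankOneCompression Q h *ᵥ x =
      (((re (star h ⬝ᵥ Q *ᵥ h))⁻¹ * ‖star x ⬝ᵥ Q *ᵥ h‖ ^ 2 : ℝ) : 𝕜) := by
  have hsymm : star (Q *ᵥ h) ⬝ᵥ x = star (star x ⬝ᵥ Q *ᵥ h) := by rw [star_dotProduct]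
  rw [rankOneCompression, smul_mulVec, dotProduct_smul, vecMulVec_mulVec, dotProduct_smul, hsymm]
  simp only [op_smul_eq_mul, smul_eq_mul, star_def, mul_conj, ofReal_mul, ofReal_pow]

theorem posSemidef_rankOneCompression (hQ : Q.PosSemidef) (h : ι → 𝕜) :
    (rankOneCompression Q h).PosSemidef :=
  (posSemidef_vecMulVec_self_star _).smul
    (ofReal_nonneg.mpr (inv_nonneg.mpr (hQ.re_dotProduct_nonneg h)))

theorem posSemidef_sub_rankOneCompression (hQ : Q.PosSemidef) (h : ι → 𝕜) :
    (Q - rankOneCompression Q h).PosSemidef := by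
  refine .of_dotProduct_mulVec_nonneg (hQ.1.sub (posSemidef_rankOneCompression hQ h).1)
    fun x => ?_
  rw [sub_mulVec, dotProduct_sub, dotProduct_rankOneCompression_mulVec_self,
    ← hQ.ofReal_re_dotProduct_mulVec x, ← ofReal_sub, ofReal_nonneg, sub_nonneg]
  rcases (hQ.re_dotProduct_nonneg h).eq_or_lt with hzero | hpos
  · simpa [← hzero] using hQ.re_dotProduct_nonneg x
  · rw [inv_mul_le_iff₀ hpos, mul_comm]
    exact hQ.norm_dotProduct_mulVec_sq_le x h

theorem PosSemidef.dotProduct_rankOneCompression_mulVec (hQ : Q.PosSemidef) (h : ι → 𝕜) :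
    star h ⬝ᵥ rankOneCompression Q h *ᵥ h = star h ⬝ᵥ Q *ᵥ h := by
  obtain ⟨α, hα0, hα⟩ := nonneg_iff_exists_ofReal.mp (hQ.dotProduct_mulVec_nonneg h)
  rw [dotProduct_rankOneCompression_mulVec_self, ← hα, ofReal_re, norm_ofReal, sq_abs,
    ofReal_inj]
  rcases hα0.eq_or_lt with rfl | hpos
  · simp
  · field_simp

end RankOneCompression

end Matrix

section Feasibility

variable {n K L : ℕ} {m : Fin K → ℕ} {m' : Fin L → ℕ}
  {He : (k : Fin K) → Matrix (Fin n) (Fin (m k)) ℂ}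
  {Hl : (l : Fin L) → Matrix (Fin n) (Fin (m' l)) ℂ}
  {σe P : ℝ} {p : Fin n → ℝ} {E : Fin L → ℝ} {t : ℝ}

theorem Feas7.transfer {Q W Q' : Matrix (Fin n) (Fin n) ℂ}
    (hF : Feas7 n K L m m' He Hl σe P p E t Q W) (hQ' : Q'.PosSemidef)
    (hQQ' : (Q - Q').PosSemidef) (ht : 0 ≤ t) :
    Feas7 n K L m m' He Hl σe P p E t Q' (W + (Q - Q')) := by
  obtain ⟨-, hW, heve, htr, hdiag, hEH⟩ := hF
  have hsum : Q' + (W + (Q - Q')) = Q + W := by abel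
  refine ⟨hQ', hW.add hQQ', fun k => ?_, by rwa [hsum], by rwa [hsum], by rwa [hsum]⟩
  have hsplit : (((1 / t - 1 : ℝ)) : ℂ) • (W + (Q - Q')) - Q' =
      ((((1 / t - 1 : ℝ)) : ℂ) • W - Q) + ((1 / t : ℝ) : ℂ) • (Q - Q') := by
    push_cast
    module
  have hgain : (((1 / t : ℝ) : ℂ) • (Q - Q')).PosSemidef :=
    hQQ'.smul (RCLike.ofReal_nonneg.mpr (one_div_nonneg.mpr ht))
  rw [hsplit, Matrix.mul_add, Matrix.add_mul, ← add_assoc]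
  exact (heve k).add (hgain.conjTranspose_mul_mul_same (He k))

theorem isCompact_setOf_feas7 :
    IsCompact {x : Matrix (Fin n) (Fin n) ℂ × Matrix (Fin n) (Fin n) ℂ |
      Feas7 n K L m m' He Hl σe P p E t x.1 x.2} := by
  have hK := isCompact_setOf_posSemidef_re_trace_le (ι := Fin n) (𝕜 := ℂ) P
  refine (hK.prod hK).of_isClosed_subset ?_ ?_
  · simp only [Feas7, Set.ofPred_and, Set.ofPred_forall]
    refine .inter (isClosed_setOf_posSemidef.preimage continuous_fst) <|
      .inter (isClosed_setOf_posSemidef.preimage continuous_snd) <|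
      .inter (isClosed_iInter fun k => isClosed_setOf_posSemidef.preimage (by fun_prop)) <|
      .inter (isClosed_le (by fun_prop) continuous_const) <|
      .inter (isClosed_iInter fun i => isClosed_le (by fun_prop) continuous_const) <|
      isClosed_iInter fun l => isClosed_le continuous_const (by fun_prop)
  · rintro ⟨Q, W⟩ ⟨hQ, hW, -, htr, -, -⟩
    exact ⟨⟨hQ, hW.re_trace_le_re_trace_add.trans htr⟩,
      ⟨hW, hQ.re_trace_le_re_trace_add.trans (add_comm Q W ▸ htr)⟩⟩

end Feasibility

section Objective

variable {n : ℕ} {hs : Fin n → ℂ} {σs : ℝ}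

theorem continuousOn_phi7 (hσs : 0 < σs) :
    ContinuousOn (fun x : Matrix (Fin n) (Fin n) ℂ × Matrix (Fin n) (Fin n) ℂ =>
      phi7 n hs σs x.1 x.2) {x | x.2.PosSemidef} := by
  unfold phi7
  refine .div (by fun_prop) (by fun_prop) fun x hx => ?_
  exact (add_pos_of_nonneg_of_pos (hx.re_dotProduct_nonneg hs) (by positivity)).ne'

theorem phi7_transfer {Q W Q' : Matrix (Fin n) (Fin n) ℂ}
    (hQ' : star hs ⬝ᵥ Q' *ᵥ hs = star hs ⬝ᵥ Q *ᵥ hs) :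
    phi7 n hs σs Q' (W + (Q - Q')) = phi7 n hs σs Q W := by
  simp only [phi7, add_mulVec, sub_mulVec, dotProduct_add, dotProduct_sub, hQ', sub_self, add_zero]

end Objective

theorem stmt7_general (n K L : ℕ)
    (m : Fin K → ℕ) (m' : Fin L → ℕ)
    (hs : Fin n → ℂ)
    (He : (k : Fin K) → Matrix (Fin n) (Fin (m k)) ℂ)
    (Hl : (l : Fin L) → Matrix (Fin n) (Fin (m' l)) ℂ)
    (σs σe P : ℝ) (p : Fin n → ℝ) (E : Fin L → ℝ) (t : ℝ)
    (hσs : 0 < σs) (ht0 : 0 < t)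
    (hne : ∃ Q W, Feas7 n K L m m' He Hl σe P p E t Q W) :
    ∃ Qs Ws, Feas7 n K L m m' He Hl σe P p E t Qs Ws ∧ Qs.rank ≤ 1 ∧
      ∀ Q W, Feas7 n K L m m' He Hl σe P p E t Q W →
        phi7 n hs σs Q W ≤ phi7 n hs σs Qs Ws := by
  obtain ⟨Q₀, W₀, hQW₀⟩ := hne
  obtain ⟨⟨Q, W⟩, hQW, hmax⟩ := isCompact_setOf_feas7.exists_isMaxOn ⟨(Q₀, W₀), hQW₀⟩
    ((continuousOn_phi7 hσs).mono fun x hx => hx.2.1)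
  have hQ : Q.PosSemidef := hQW.1
  refine ⟨rankOneCompression Q hs, W + (Q - rankOneCompression Q hs),
    hQW.transfer (posSemidef_rankOneCompression hQ hs) (posSemidef_sub_rankOneCompression hQ hs)
      ht0.le, rank_rankOneCompression_le Q hs, fun Q' W' hQW' => ?_⟩
  rw [phi7_transfer (hQ.dotProduct_rankOneCompression_mulVec hs)]
  exact isMaxOn_iff.mp hmax (Q', W') hQW'

/-- Corollary 1, perfect CSI: rank-one tightness with multiantenna
eavesdroppers and EH receivers. -/
theorem stmt7 (n K L : ℕ) (hn : 1 ≤ n) (hK : 1 ≤ K) (hL : 1 ≤ L)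
    (m : Fin K → ℕ) (m' : Fin L → ℕ)
    (hs : Fin n → ℂ)
    (He : (k : Fin K) → Matrix (Fin n) (Fin (m k)) ℂ)
    (Hl : (l : Fin L) → Matrix (Fin n) (Fin (m' l)) ℂ)
    (σs σe P : ℝ) (p : Fin n → ℝ) (E : Fin L → ℝ) (t : ℝ)
    (hσs : 0 < σs) (hσe : 0 < σe) (hP : 0 < P) (hp : ∀ i, 0 < p i)
    (hE : ∀ l, 0 < E l) (ht0 : 0 < t) (ht1 : t ≤ 1)
    (hne : ∃ Q W, Feas7 n K L m m' He Hl σe P p E t Q W) :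
    ∃ Qs Ws, Feas7 n K L m m' He Hl σe P p E t Qs Ws ∧ Qs.rank ≤ 1 ∧
      ∀ Q W, Feas7 n K L m m' He Hl σe P p E t Q W →
        phi7 n hs σs Q W ≤ phi7 n hs σs Qs Ws :=
  stmt7_general n K L m m' hs He Hl σs σe P p E t hσs ht0 hne
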